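/- If Q is a connected quandle with n > 1 elements, then Inn(Q) is not abelian. -/

import Mathlib

/-!
If `Inn Q` is abelian, the identity `S_{x ▷ y} = S_y S_x S_y⁻¹` collapses to `S_{x ▷ y} = S_x`,
so `x ↦ S_x` is constant on `Inn Q`-orbits. In a connected quandle it is then constant, and
`x ▷ y = S_y x = S_x x = x` makes every `S_y` trivial. So `Inn Q` is trivial, and it can only act
transitively on a quandle with at most one element.
-/

universe u

/-- A quandle with a *right* self-distributive operation `x ▷ y`, following
Ehrman–Gurpinar–Thibault–Yetter. -/
class RQuandle (Q : Type u) where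
  act : Q → Q → Q
  act_self : ∀ x : Q, act x x = x
  act_rinv : ∀ a b : Q, ∃! y, act y a = b
  act_distrib : ∀ a b c : Q, act (act a b) c = act (act a c) (act b c)

infixl:65 " ▷ " => RQuandle.act

namespace RQuandle

variable {Q : Type u} [RQuandle Q]

/-- The inner automorphism `S_y : x ↦ x ▷ y`, as a permutation of `Q`. -/
noncomputable def SPerm (y : Q) : Equiv.Perm Q :=
  Equiv.ofBijective (fun x => x ▷ y)
    ⟨fun a b h => by
        obtain ⟨c, _, hu⟩ := RQuandle.act_rinv y (b ▷ y)
        exact (hu a h).trans (hu b rfl).symm,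
      fun b => (RQuandle.act_rinv y b).exists⟩

@[simp] lemma SPerm_apply (x y : Q) : SPerm y x = x ▷ y := rfl

/-- The inner automorphism group of a quandle: the subgroup of `Equiv.Perm Q`
generated by the maps `S_y`. -/
def Inn (Q : Type u) [RQuandle Q] : Subgroup (Equiv.Perm Q) :=
  Subgroup.closure (Set.range (SPerm : Q → Equiv.Perm Q))

lemma SPerm_mem_Inn (y : Q) : SPerm y ∈ Inn Q :=
  Subgroup.subset_closure ⟨y, rfl⟩

/-- A quandle is (algebraically) connected when `Inn Q` acts transitively. -/
def Connected (Q : Type u) [RQuandle Q] : Prop :=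
  ∀ x y : Q, ∃ p ∈ Inn Q, p x = y

/-- The orbit of `s` under the inner automorphism group. -/
def orbitSet (s : Q) : Set Q := {t | ∃ p ∈ Inn Q, p s = t}

/-- `f` is an automorphism of the quandle `Q`. -/
def IsQAut (f : Equiv.Perm Q) : Prop := ∀ x y : Q, f (x ▷ y) = f x ▷ f y

/-- Key conjugation identity: in left-to-right (right action) convention this is
`S_{x ▷ y} = S_y⁻¹ S_x S_y`. -/
lemma SPerm_conj (x y : Q) : SPerm (x ▷ y) = SPerm y * SPerm x * (SPerm y)⁻¹ := by
  rw [eq_mul_inv_iff_mul_eq]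
  ext u
  simp only [Equiv.Perm.mul_apply, SPerm_apply]
  exact (RQuandle.act_distrib u x y).symm

/-- Relators for the universal augmentation group `Γ_Q`: `|x ▷ y| = |y|⁻¹ |x| |y|`. -/
def augRels (Q : Type u) [RQuandle Q] : Set (FreeGroup Q) :=
  {w | ∃ x y : Q,
    w = FreeGroup.of (x ▷ y) * ((FreeGroup.of y)⁻¹ * FreeGroup.of x * FreeGroup.of y)⁻¹}

/-- The universal augmentation group `Γ_Q` of a quandle. -/
abbrev Gamma (Q : Type u) [RQuandle Q] := PresentedGroup (augRels Q)

/-- The generator `|x| ∈ Γ_Q`. -/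
def gen (x : Q) : Gamma Q := PresentedGroup.of x

/-- The canonical homomorphism `Γ_Q → Aut(Q)` sending `|y|` to `S_y`.  Since the
paper composes automorphisms as right actions, this is a homomorphism into the
opposite of the permutation group. -/
noncomputable def canHom (Q : Type u) [RQuandle Q] : Gamma Q →* (Equiv.Perm Q)ᵐᵒᵖ :=
  PresentedGroup.toGroup (f := fun y => MulOpposite.op (SPerm y)) (by
    rintro w ⟨x, y, rfl⟩
    simp only [map_mul, map_inv, FreeGroup.lift_apply_of]
    rw [← MulOpposite.op_inv, ← MulOpposite.op_mul, ← MulOpposite.op_mul, SPerm_conj]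
    simp [mul_assoc])

@[simp] lemma canHom_gen (y : Q) : canHom Q (gen y) = MulOpposite.op (SPerm y) :=
  PresentedGroup.toGroup.of _

lemma orbit_act_mem {s x : Q} (y : Q) (hx : x ∈ orbitSet s) : x ▷ y ∈ orbitSet s := by
  obtain ⟨p, hp, rfl⟩ := hx
  exact ⟨SPerm y * p, mul_mem (SPerm_mem_Inn y) hp, rfl⟩

lemma orbit_actinv_mem {s x : Q} (y : Q) (hx : x ∈ orbitSet s) :
    (SPerm y).symm x ∈ orbitSet s := by
  obtain ⟨p, hp, rfl⟩ := hx
  exact ⟨(SPerm y)⁻¹ * p, mul_mem (inv_mem (SPerm_mem_Inn y)) hp, rfl⟩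

lemma orbit_mem_iff (t : Q) (y : Q) {u : Q} :
    u ∈ orbitSet t ↔ u ▷ y ∈ orbitSet t := by
  constructor
  · exact fun h => orbit_act_mem y h
  · intro h
    have := orbit_actinv_mem y h
    rw [← SPerm_apply u y, Equiv.symm_apply_apply] at this
    exact this

/-- Each orbit of `Inn Q` is a subquandle. -/
instance orbitQuandle (s : Q) : RQuandle (orbitSet s) where
  act a b := ⟨a.1 ▷ b.1, orbit_act_mem b.1 a.2⟩
  act_self a := Subtype.ext (RQuandle.act_self a.1)
  act_rinv a b := by
    refine ⟨⟨(SPerm a.1).symm b.1, orbit_actinv_mem a.1 b.2⟩, Subtype.ext ?_, ?_⟩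
    · exact (SPerm a.1).apply_symm_apply b.1
    · rintro ⟨z, hz⟩ h
      apply Subtype.ext
      have hz' : z ▷ a.1 = b.1 := congrArg Subtype.val h
      show z = (SPerm a.1).symm b.1
      rw [← hz']
      exact ((SPerm a.1).symm_apply_apply z).symm
  act_distrib a b c := Subtype.ext (RQuandle.act_distrib a.1 b.1 c.1)

/-- Restriction of `S_x` to the orbit of `t`. -/
noncomputable def phi (t : Q) (x : Q) : Equiv.Perm (orbitSet t) :=
  (SPerm x).subtypePerm (fun u => (orbit_mem_iff t x (u := u)).symm)

/-- The quandle axioms, as a predicate on a binary operation. -/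
def IsRQuandleOp {A : Type u} (op : A → A → A) : Prop :=
  (∀ x, op x x = x) ∧ (∀ a b, ∃! y, op y a = b) ∧
    ∀ a b c, op (op a b) c = op (op a c) (op b c)

end RQuandle

namespace RQuandle

variable {Q : Type u} [RQuandle Q]

lemma SPerm_act_of_commute (hcomm : ∀ y z : Q, Commute (SPerm y) (SPerm z)) (x y : Q) :
    SPerm (x ▷ y) = SPerm x := by
  rw [SPerm_conj, (hcomm y x).eq, mul_inv_cancel_right]

lemma SPerm_apply_of_mem_Inn (hcomm : ∀ y z : Q, Commute (SPerm y) (SPerm z))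
    {p : Equiv.Perm Q} (hp : p ∈ Inn Q) (x : Q) : SPerm (p x) = SPerm x := by
  induction hp using Subgroup.closure_induction generalizing x with
  | mem g hg =>
    obtain ⟨y, rfl⟩ := hg
    exact SPerm_act_of_commute hcomm x y
  | one => rfl
  | mul p q _ _ ihp ihq => rw [Equiv.Perm.mul_apply, ihp, ihq]
  | inv p _ ihp =>
    rw [← ihp (p⁻¹ x), ← Equiv.Perm.mul_apply, mul_inv_cancel, Equiv.Perm.one_apply]

lemma SPerm_eq_one_of_connected (hc : Connected Q)
    (hcomm : ∀ y z : Q, Commute (SPerm y) (SPerm z)) (y : Q) : SPerm y = 1 := by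
  ext x
  obtain ⟨p, hp, hpx⟩ := hc x y
  have hSx : SPerm y = SPerm x := by rw [← hpx, SPerm_apply_of_mem_Inn hcomm hp]
  rw [hSx, SPerm_apply, act_self, Equiv.Perm.one_apply]

lemma Inn_eq_bot_of_connected (hc : Connected Q)
    (hcomm : ∀ y z : Q, Commute (SPerm y) (SPerm z)) : Inn Q = ⊥ :=
  Subgroup.closure_eq_bot_iff.mpr <| by
    rintro _ ⟨y, rfl⟩
    exact SPerm_eq_one_of_connected hc hcomm y

lemma Connected.subsingleton_of_Inn_eq_bot (hc : Connected Q) (hbot : Inn Q = ⊥) :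
    Subsingleton Q := by
  refine ⟨fun x y => ?_⟩
  obtain ⟨p, hp, rfl⟩ := hc x y
  rw [hbot, Subgroup.mem_bot] at hp
  rw [hp, Equiv.Perm.one_apply]

end RQuandle

open RQuandle in
theorem inn_not_abelian {Q : Type u} [RQuandle Q] [Fintype Q]
    (hc : Connected Q) (hn : 1 < Fintype.card Q) :
    ¬ ∀ a b : ↥(Inn Q), a * b = b * a := by
  intro habel
  have hcomm : ∀ y z : Q, Commute (SPerm y) (SPerm z) := fun y z =>
    congrArg Subtype.val (habel ⟨SPerm y, SPerm_mem_Inn y⟩ ⟨SPerm z, SPerm_mem_Inn z⟩)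
  have hsub := hc.subsingleton_of_Inn_eq_bot (Inn_eq_bot_of_connected hc hcomm)
  exact (Fintype.card_le_one_iff_subsingleton.mpr hsub).not_gt hn
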